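/- Let n ≥ 1, κ > 0, K ⊂ ℝ^n compact, and let (μ0^N), (μ1^N) be sequences of finite nonnegative Borel measures supported in K converging narrowly to μ0 and μ1 respectively, where μ0 is absolutely continuous with respect to Lebesgue measure. Let (π^N) be finite nonnegative measures on K × K with KL(π0^N|μ0^N) < ∞ and ∫ c_κ dπ^N < ∞, such that the measures (1/cos(|x−y|/κ))·π^N converge narrowly to (1/cos(|x−y|/κ))·π, where π is the (unique) minimizer of E_κ(·|μ0,μ1). Let (v0^N, α0^N) be the barycentric HK logarithmic components of π^N relative to μ0^N, and (v0, α0) those of π relative to μ0. Then for every continuous vector field φ : K → ℝ^n and every continuous function ψ : K → ℝ, ∫ ⟨φ, v0^N⟩ dμ0^N → ∫ ⟨φ, v0⟩ dμ0 and ∫ ψ α0^N dμ0^N → ∫ ψ α0 dμ0 as N → ∞. -/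

import Mathlib

open MeasureTheory ENNReal Filter Topology RealInnerProductSpace
open scoped Classical

noncomputable section

abbrev Eucl (n : ℕ) : Type := EuclideanSpace ℝ (Fin n)

/-- Truncated cosine `Cos`. -/
def truncCos (s : ℝ) : ℝ := Real.cos (min |s| (Real.pi / 2))

/-- The Hellinger–Kantorovich cost function `c_κ`. -/
def cHK {n : ℕ} (κ : ℝ) (x y : Eucl n) : ℝ≥0∞ :=
  if dist x y < κ * Real.pi / 2 then
    ENNReal.ofReal (-2 * κ ^ 2 * Real.log (Real.cos (dist x y / κ)))
  else ⊤

/-- Kullback–Leibler divergence `KL(ρ|μ)`. -/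
def KLdiv {α : Type*} [MeasurableSpace α] (ρ μ : Measure α) : ℝ≥0∞ :=
  if ρ ≪ μ then
    ∫⁻ x, ENNReal.ofReal ((ρ.rnDeriv μ x).toReal * Real.log (ρ.rnDeriv μ x).toReal
      - (ρ.rnDeriv μ x).toReal + 1) ∂μ
  else ⊤

/-- The soft-marginal Hellinger–Kantorovich functional `E_κ(π|μ0,μ1)`. -/
def HKfun {n : ℕ} (κ : ℝ) (π : Measure (Eucl n × Eucl n)) (μ0 μ1 : Measure (Eucl n)) : ℝ≥0∞ :=
  ∫⁻ p, cHK κ p.1 p.2 ∂π + ENNReal.ofReal (κ ^ 2) * KLdiv (π.map Prod.fst) μ0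
    + ENNReal.ofReal (κ ^ 2) * KLdiv (π.map Prod.snd) μ1

/-- The squared Hellinger–Kantorovich distance `HK_κ²(μ0,μ1)`. -/
def HK2 {n : ℕ} (κ : ℝ) (μ0 μ1 : Measure (Eucl n)) : ℝ≥0∞ :=
  ⨅ (π : Measure (Eucl n × Eucl n)) (_ : IsFiniteMeasure π), HKfun κ π μ0 μ1

/-- The squared 2-Wasserstein distance `W2²(μ0,μ1)`. -/
def W2sq {n : ℕ} (μ0 μ1 : Measure (Eucl n)) : ℝ≥0∞ :=
  ⨅ (π : Measure (Eucl n × Eucl n))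
    (_ : π.map Prod.fst = μ0 ∧ π.map Prod.snd = μ1),
      ∫⁻ p, ENNReal.ofReal (dist p.1 p.2 ^ 2) ∂π

/-- Narrow convergence of a sequence of measures. -/
def NarrowTendsto {α : Type*} [MeasurableSpace α] [TopologicalSpace α]
    (ρ : ℕ → Measure α) (ρlim : Measure α) : Prop :=
  ∀ φ : BoundedContinuousFunction α ℝ,
    Tendsto (fun N => ∫ x, φ x ∂(ρ N)) atTop (𝓝 (∫ x, φ x ∂ρlim))

/-- The spherical Hellinger–Kantorovich distance `SHK_κ(μ0,μ1)`. -/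
def SHK {n : ℕ} (κ : ℝ) (μ0 μ1 : Measure (Eucl n)) : ℝ :=
  κ * Real.arccos (1 - (HK2 κ μ0 μ1).toReal / (2 * κ ^ 2))

/-- The square-root measure `√(ρσ)`. -/
def sqrtMeasure {α : Type*} [MeasurableSpace α] (ρ σ : Measure α) : Measure α :=
  (ρ + σ).withDensity (fun x => (ρ.rnDeriv (ρ + σ) x * σ.rnDeriv (ρ + σ) x) ^ (1/2 : ℝ))



/-- barycentric HK velocity. -/
def barV {n : ℕ} (κ : ℝ) (μ0 : Measure (Eucl n)) (π : Measure (Eucl n × Eucl n))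
    [IsFiniteMeasure π] (x : Eucl n) : Eucl n :=
  (κ * ((π.map Prod.fst).rnDeriv μ0 x).toReal) •
    ∫ y, (Real.tan (‖y - x‖ / κ) / ‖y - x‖) • (y - x) ∂(π.condKernel x)

/-- barycentric HK growth. -/
def barA {n : ℕ} (μ0 : Measure (Eucl n)) (π : Measure (Eucl n × Eucl n)) (x : Eucl n) : ℝ :=
  2 * (((π.map Prod.fst).rnDeriv μ0 x).toReal - 1)

/-- barycentric W2 velocity. -/
def barW {n : ℕ} (π : Measure (Eucl n × Eucl n)) [IsFiniteMeasure π] (x : Eucl n) : Eucl n :=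
  ∫ y, (y - x) ∂(π.condKernel x)

end

/-! With `ν = π / cos(|x - y| / κ)`, disintegrating `π` over its first marginal
`π₀ = (dπ₀/dμ₀) μ₀` turns the barycentric components into moments of `ν`:
`∫ ⟨φ, v₀⟩ dμ₀ = ∫ κ sin(|y - x| / κ) ⟨φ(x), (y - x)/|y - x|⟩ dν` and
`∫ ψ α₀ dμ₀ = 2 ∫ cos(|x - y| / κ) ψ(x) dν - 2 ∫ ψ dμ₀`.
Both integrands are continuous, and only their values on `K × K` matter, so they may be replaced
by bounded ones: the limit plan lives on `K × K` because its finite HK energy forces `π₀ ≪ μ₀`,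
`π₁ ≪ μ₁`, and narrow limits of measures carried by `K` are carried by `K`. Narrow convergence of
`ν^N` and `μ₀^N` then gives both limits. -/

open scoped BoundedContinuousFunction

section RadialField

variable {E : Type*} [NormedAddCommGroup E] [NormedSpace ℝ E]

/-- `f ‖y - x‖` times the unit vector from `x` to `y`; zero when `y = x`. -/
noncomputable def radialField (f : ℝ → ℝ) (x y : E) : E := (f ‖y - x‖ / ‖y - x‖) • (y - x)

lemma norm_radialField_le (f : ℝ → ℝ) (x y : E) : ‖radialField f x y‖ ≤ |f ‖y - x‖| := by
  rcases eq_or_ne (y - x) 0 with h | h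
  · simp [radialField, h]
  · rw [radialField, norm_smul, Real.norm_eq_abs, abs_div, abs_norm,
      div_mul_cancel₀ _ (norm_ne_zero_iff.mpr h)]

lemma continuous_radialField {f : ℝ → ℝ} (hf : Continuous f) (hf0 : f 0 = 0) :
    Continuous fun p : E × E => radialField f p.1 p.2 := by
  rw [continuous_iff_continuousAt]
  rintro ⟨x, y⟩
  rcases eq_or_ne (y - x) 0 with h | h
  · have hzero : radialField f x y = 0 := by simp [radialField, h]
    rw [ContinuousAt, hzero]
    refine squeeze_zero_norm (fun p => norm_radialField_le f p.1 p.2) ?_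
    have : Continuous fun p : E × E => |f ‖p.2 - p.1‖| := by fun_prop
    simpa [h, hf0] using this.continuousAt.tendsto (x := (x, y))
  · have hnorm : Continuous fun p : E × E => ‖p.2 - p.1‖ := by fun_prop
    exact (((hf.comp hnorm).continuousAt).div hnorm.continuousAt
      (norm_ne_zero_iff.mpr h)).smul (by fun_prop)

lemma smul_radialField (c f : ℝ → ℝ) (x y : E) :
    c ‖y - x‖ • radialField f x y = radialField (fun t => c t * f t) x y := by
  rw [radialField, radialField, smul_smul, mul_div_assoc]

lemma radialField_tan (κ : ℝ) (x y : E) :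
    radialField (fun t => Real.tan (t / κ)) x y
      = (Real.cos (dist x y / κ))⁻¹ • radialField (fun t => Real.sin (t / κ)) x y := by
  rw [dist_eq_norm', smul_radialField (fun t => (Real.cos (t / κ))⁻¹)]
  simp only [Real.tan_eq_sin_div_cos, div_eq_inv_mul]

end RadialField

section WithDensity

variable {α : Type*} [MeasurableSpace α] {μ : Measure α} {w : α → ℝ}
  {E : Type*} [NormedAddCommGroup E] [NormedSpace ℝ E]

lemma integral_withDensity_ofReal (hw : Measurable w) (hw0 : ∀ᵐ x ∂μ, 0 ≤ w x) (g : α → E) :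
    ∫ x, g x ∂μ.withDensity (fun x => ENNReal.ofReal (w x)) = ∫ x, w x • g x ∂μ := by
  rw [integral_withDensity_eq_integral_toReal_smul hw.ennreal_ofReal
    (ae_of_all _ fun _ => ENNReal.ofReal_lt_top)]
  refine integral_congr_ae ?_
  filter_upwards [hw0] with x hx
  rw [ENNReal.toReal_ofReal hx]

lemma MeasureTheory.Integrable.smul_of_withDensity_ofReal (hw : Measurable w)
    (hw0 : ∀ᵐ x ∂μ, 0 ≤ w x) {g : α → E} (hg : Integrable g (μ.withDensity fun x => ENNReal.ofReal (w x))) :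
    Integrable (fun x => w x • g x) μ := by
  rw [integrable_withDensity_iff_integrable_smul' hw.ennreal_ofReal
    (ae_of_all _ fun _ => ENNReal.ofReal_lt_top)] at hg
  refine hg.congr ?_
  filter_upwards [hw0] with x hx
  rw [ENNReal.toReal_ofReal hx]

end WithDensity

lemma measure_compl_prod_eq_zero {α β : Type*} [MeasurableSpace α] [MeasurableSpace β]
    {μ : Measure α} {ν : Measure β} {π : Measure (α × β)} {s : Set α} {t : Set β}
    (hs : MeasurableSet s) (ht : MeasurableSet t)
    (hac₁ : π.map Prod.fst ≪ μ) (hac₂ : π.map Prod.snd ≪ ν)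
    (hμs : μ sᶜ = 0) (hνt : ν tᶜ = 0) : π (s ×ˢ t)ᶜ = 0 := by
  have h₁ : π (Prod.fst ⁻¹' sᶜ) = 0 := by
    rw [← Measure.map_apply measurable_fst hs.compl]; exact hac₁ hμs
  have h₂ : π (Prod.snd ⁻¹' tᶜ) = 0 := by
    rw [← Measure.map_apply measurable_snd ht.compl]; exact hac₂ hνt
  refine measure_mono_null (fun p hp => ?_) (measure_union_null h₁ h₂)
  simp only [Set.mem_compl_iff, Set.mem_prod, not_and_or] at hp
  exact hp

-- Junk value: the Bochner integral of `1` against an infinite measure is `0`, so a narrow limit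
-- is not automatically finite.
lemma isFiniteMeasure_withDensity_of_narrowTendsto {α : Type*} [MeasurableSpace α]
    [TopologicalSpace α] [OpensMeasurableSpace α] {ρ : ℕ → Measure α}
    [∀ N, IsFiniteMeasure (ρ N)] {π : Measure α} [IsFiniteMeasure π] {w : α → ℝ}
    (hw : Measurable w) (hw0 : ∀ᵐ x ∂π, 0 ≤ w x) (g : α →ᵇ ℝ) (hwg : ∀ᵐ x ∂π, w x * g x = 1)
    (h : NarrowTendsto ρ (π.withDensity fun x => ENNReal.ofReal (w x))) :
    IsFiniteMeasure (π.withDensity fun x => ENNReal.ofReal (w x)) := by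
  set ν := π.withDensity fun x => ENNReal.ofReal (w x)
  by_contra hν
  rw [not_isFiniteMeasure_iff] at hν
  have hmass : Tendsto (fun N => (ρ N).real Set.univ) atTop (𝓝 0) := by
    simpa [measureReal_def, hν] using h (BoundedContinuousFunction.const α 1)
  have hg_zero : Tendsto (fun N => ∫ x, g x ∂ρ N) atTop (𝓝 0) := by
    refine squeeze_zero_norm (fun N => g.norm_integral_le_mul_norm (ρ N)) ?_
    simpa using hmass.mul_const ‖g‖
  have hg_lim : ∫ x, g x ∂ν = π.real Set.univ := by
    calc ∫ x, g x ∂ν = ∫ x, w x * g x ∂π := integral_withDensity_ofReal hw hw0 g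
      _ = ∫ _, (1 : ℝ) ∂π := integral_congr_ae hwg
      _ = π.real Set.univ := by simp
  have hπ : π = 0 := by
    rw [← Measure.measure_univ_eq_zero, ← measureReal_eq_zero_iff,
      ← hg_lim, tendsto_nhds_unique (h g) hg_zero]
  simp [ν, hπ] at hν

lemma measure_compl_eq_zero_of_narrowTendsto {α : Type*} [PseudoEMetricSpace α]
    [MeasurableSpace α] [OpensMeasurableSpace α] {K : Set α} (hK : IsClosed K)
    {ρ : ℕ → Measure α} {μ : Measure α} [IsFiniteMeasure μ] (hρK : ∀ N, ρ N Kᶜ = 0)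
    (h : NarrowTendsto ρ μ) : μ Kᶜ = 0 := by
  let f : α →ᵇ ℝ := BoundedContinuousFunction.ofNormedAddCommGroup
    (fun x => ENNReal.truncateToReal 1 (Metric.infEDist x K))
    ((ENNReal.continuous_truncateToReal ENNReal.one_ne_top).comp Metric.continuous_infEDist) 1
    (fun x => by
      rw [Real.norm_eq_abs, abs_of_nonneg ENNReal.truncateToReal_nonneg]
      simpa using ENNReal.truncateToReal_le ENNReal.one_ne_top)
  have hf_zero : ∀ x ∈ K, f x = 0 := fun x hx => by
    simp [f, ENNReal.truncateToReal, Metric.infEDist_zero_of_mem hx]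
  have hf_pos : ∀ x ∉ K, 0 < f x := fun x hx => by
    have : Metric.infEDist x K ≠ 0 := fun h0 =>
      hx ((Metric.mem_iff_infEDist_zero_of_closed hK).mpr h0)
    simp [f, ENNReal.truncateToReal, ENNReal.toReal_pos_iff, pos_iff_ne_zero, this]
  have hintegral : ∫ x, f x ∂μ = 0 := by
    refine tendsto_nhds_unique (h f) (tendsto_const_nhds.congr fun N => ?_)
    refine (integral_eq_zero_of_ae ?_).symm
    filter_upwards [mem_ae_iff.mpr (hρK N)] with x hx using hf_zero x hx
  have hf_nonneg : 0 ≤ ⇑f := fun x => by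
    by_cases hx : x ∈ K
    · exact (hf_zero x hx).ge
    · exact (hf_pos x hx).le
  have hae : f =ᵐ[μ] 0 := (integral_eq_zero_iff_of_nonneg hf_nonneg (f.integrable μ)).mp hintegral
  exact measure_mono_null (fun x hx => (hf_pos x hx).ne') (ae_iff.mp hae)

lemma IsCompact.exists_boundedContinuousFunction_eqOn {X : Type*} [TopologicalSpace X]
    {K : Set X} (hK : IsCompact K) {f : X → ℝ} (hf : Continuous f) :
    ∃ g : X →ᵇ ℝ, Set.EqOn g f K := by
  obtain ⟨C, hC⟩ := hK.exists_bound_of_continuousOn hf.continuousOn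
  refine ⟨.ofNormedAddCommGroup (fun x => max (-|C|) (min |C| (f x))) (by fun_prop) |C|
    fun x => abs_le.mpr ⟨le_max_left _ _, max_le (by linarith [abs_nonneg C]) (min_le_left _ _)⟩,
    fun x hx => ?_⟩
  obtain ⟨hlo, hhi⟩ := abs_le.mp ((Real.norm_eq_abs _ ▸ hC x hx).trans (le_abs_self C))
  simp [min_eq_right hhi, max_eq_right hlo]

section HellingerKantorovich

variable {n : ℕ} {κ : ℝ}

lemma absolutelyContinuous_of_KLdiv_ne_top {α : Type*} [MeasurableSpace α] {ρ μ : Measure α}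
    (h : KLdiv ρ μ ≠ ⊤) : ρ ≪ μ := by
  by_contra hac
  simp [KLdiv, hac] at h

lemma KLdiv_zero_left {α : Type*} [MeasurableSpace α] (μ : Measure α) :
    KLdiv 0 μ = μ Set.univ := by
  rw [KLdiv, if_pos (Measure.AbsolutelyContinuous.zero μ), ← lintegral_one]
  refine lintegral_congr_ae ?_
  filter_upwards [Measure.rnDeriv_zero μ] with x hx
  simp [hx]

lemma HK2_ne_top (κ : ℝ) (μ0 μ1 : Measure (Eucl n)) [IsFiniteMeasure μ0] [IsFiniteMeasure μ1] :
    HK2 κ μ0 μ1 ≠ ⊤ := by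
  have hzero : HKfun κ 0 μ0 μ1 ≠ ⊤ := by
    simp [HKfun, KLdiv_zero_left, ENNReal.mul_ne_top]
  exact ne_top_of_le_ne_top hzero (iInf₂_le _ (by infer_instance))

lemma lintegral_cHK_ne_top_and_KLdiv_ne_top (hκ : κ ≠ 0) {π : Measure (Eucl n × Eucl n)}
    {μ0 μ1 : Measure (Eucl n)} (h : HKfun κ π μ0 μ1 ≠ ⊤) :
    ∫⁻ p, cHK κ p.1 p.2 ∂π ≠ ⊤ ∧ KLdiv (π.map Prod.fst) μ0 ≠ ⊤
      ∧ KLdiv (π.map Prod.snd) μ1 ≠ ⊤ := by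
  have hκ2 : ENNReal.ofReal (κ ^ 2) ≠ 0 := by simpa using hκ
  simpa [HKfun, ENNReal.add_ne_top, ENNReal.mul_eq_top, hκ2, and_assoc] using h

lemma ae_cos_pos_of_lintegral_cHK_ne_top (hκ : 0 < κ) {π : Measure (Eucl n × Eucl n)}
    (h : ∫⁻ p, cHK κ p.1 p.2 ∂π ≠ ⊤) : ∀ᵐ p ∂π, 0 < Real.cos (dist p.1 p.2 / κ) := by
  have hfar : MeasurableSet {p : Eucl n × Eucl n | κ * Real.pi / 2 ≤ dist p.1 p.2} :=
    measurableSet_le measurable_const (by fun_prop)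
  have hnull : π {p | κ * Real.pi / 2 ≤ dist p.1 p.2} = 0 := by
    by_contra hpos
    refine h (top_unique ?_)
    calc ⊤ = ∫⁻ _ in {p : Eucl n × Eucl n | κ * Real.pi / 2 ≤ dist p.1 p.2}, ⊤ ∂π := by
          simp [hpos]
      _ ≤ ∫⁻ p, cHK κ p.1 p.2 ∂π := by
          refine (setLIntegral_congr_fun hfar fun p hp => ?_).le.trans
            (setLIntegral_le_lintegral _ _)
          simp [cHK, not_lt.mpr (show κ * Real.pi / 2 ≤ dist p.1 p.2 from hp)]
  filter_upwards [measure_eq_zero_iff_ae_notMem.mp hnull] with p hp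
  have hdist : 0 ≤ dist p.1 p.2 / κ := div_nonneg dist_nonneg hκ.le
  refine Real.cos_pos_of_mem_Ioo ⟨by linarith [Real.pi_pos], ?_⟩
  rw [div_lt_iff₀ hκ]
  linarith [not_le.mp hp]

end HellingerKantorovich

noncomputable abbrev secWeighted {α : Type*} [PseudoMetricSpace α] [MeasurableSpace α] (κ : ℝ)
    (π : Measure (α × α)) : Measure (α × α) :=
  π.withDensity fun p => ENNReal.ofReal (Real.cos (dist p.1 p.2 / κ))⁻¹

section Barycentric

variable {n : ℕ} {κ : ℝ} {μ : Measure (Eucl n)} {π : Measure (Eucl n × Eucl n)}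
  [IsFiniteMeasure π]

lemma integral_inner_barV_eq_integral_secWeighted [SigmaFinite μ] (hac : π.map Prod.fst ≪ μ)
    (hcos : ∀ᵐ p ∂π, 0 < Real.cos (dist p.1 p.2 / κ)) [IsFiniteMeasure (secWeighted κ π)]
    (φ : Eucl n → Eucl n) {G : Eucl n × Eucl n → ℝ} (hG_int : Integrable G (secWeighted κ π))
    (hG : ∀ᵐ p ∂π, G p = κ * ⟪φ p.1, radialField (fun t => Real.sin (t / κ)) p.1 p.2⟫) :
    ∫ x, ⟪φ x, barV κ μ π x⟫ ∂μ = ∫ p, G p ∂secWeighted κ π := by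
  have hw : Measurable fun p : Eucl n × Eucl n => (Real.cos (dist p.1 p.2 / κ))⁻¹ := by
    fun_prop
  have hw0 : ∀ᵐ p ∂π, 0 ≤ (Real.cos (dist p.1 p.2 / κ))⁻¹ := hcos.mono fun p hp => by positivity
  set V := fun p : Eucl n × Eucl n => radialField (fun t => Real.tan (t / κ)) p.1 p.2 with hV
  have hV_int : Integrable V π := by
    have hsin : Integrable (fun p : Eucl n × Eucl n =>
        radialField (fun t => Real.sin (t / κ)) p.1 p.2) (secWeighted κ π) :=
      .of_bound (continuous_radialField (by fun_prop) (by simp)).aestronglyMeasurable 1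
        (ae_of_all _ fun p => (norm_radialField_le _ _ _).trans (Real.abs_sin_le_one _))
    simpa only [V, radialField_tan] using hsin.smul_of_withDensity_ofReal hw hw0
  have hf_int : Integrable (fun p => κ * ⟪φ p.1, V p⟫) π := by
    refine (hG_int.smul_of_withDensity_ofReal hw hw0).congr ?_
    filter_upwards [hG] with p hp
    simp only [hp, hV, radialField_tan, real_inner_smul_right, smul_eq_mul]
    ring
  calc ∫ x, ⟪φ x, barV κ μ π x⟫ ∂μ
      = ∫ x, ((π.map Prod.fst).rnDeriv μ x).toReal
          • (κ * ⟪φ x, ∫ y, V (x, y) ∂π.condKernel x⟫) ∂μ := by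
        refine integral_congr_ae (ae_of_all _ fun x => ?_)
        change ⟪φ x, (κ * _) • ∫ y, V (x, y) ∂π.condKernel x⟫ = _
        simp only [real_inner_smul_right, smul_eq_mul]
        ring
    _ = ∫ x, κ * ⟪φ x, ∫ y, V (x, y) ∂π.condKernel x⟫ ∂π.fst := integral_rnDeriv_smul hac
    _ = ∫ x, ∫ y, κ * ⟪φ x, V (x, y)⟫ ∂π.condKernel x ∂π.fst := by
        refine integral_congr_ae ?_
        filter_upwards [hV_int.condKernel_ae] with x hx
        rw [integral_const_mul, integral_inner hx]
    _ = ∫ p, κ * ⟪φ p.1, V p⟫ ∂π := Measure.integral_condKernel hf_int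
    _ = ∫ p, (Real.cos (dist p.1 p.2 / κ))⁻¹ * G p ∂π := by
        refine integral_congr_ae ?_
        filter_upwards [hG] with p hp
        simp only [hp, hV, radialField_tan, real_inner_smul_right]
        ring
    _ = _ := (integral_withDensity_ofReal hw hw0 G).symm

lemma integral_mul_barA_eq_integral_secWeighted [IsFiniteMeasure μ] (hac : π.map Prod.fst ≪ μ)
    (hcos : ∀ᵐ p ∂π, 0 < Real.cos (dist p.1 p.2 / κ)) (ψ : Eucl n →ᵇ ℝ)
    {H : Eucl n × Eucl n → ℝ} (hH : ∀ᵐ p ∂π, H p = Real.cos (dist p.1 p.2 / κ) * ψ p.1) :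
    ∫ x, ψ x * barA μ π x ∂μ = 2 * ∫ p, H p ∂secWeighted κ π - 2 * ∫ x, ψ x ∂μ := by
  set r := fun x => ((π.map Prod.fst).rnDeriv μ x).toReal
  have hrψ : Integrable (fun x => r x * ψ x) μ :=
    (integrable_toReal_rnDeriv_mul_iff hac).mpr (ψ.integrable _)
  have hH_eq : ∫ p, H p ∂secWeighted κ π = ∫ p, ψ p.1 ∂π := by
    rw [integral_withDensity_ofReal (by fun_prop) (hcos.mono fun p hp => by positivity)]
    refine integral_congr_ae ?_
    filter_upwards [hcos, hH] with p hp hHp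
    rw [hHp, smul_eq_mul, ← mul_assoc, inv_mul_cancel₀ hp.ne', one_mul]
  calc ∫ x, ψ x * barA μ π x ∂μ = ∫ x, (2 * (r x * ψ x) - 2 * ψ x) ∂μ := by
        refine integral_congr_ae (ae_of_all _ fun x => ?_)
        simp only [barA]
        ring
    _ = 2 * ∫ x, r x * ψ x ∂μ - 2 * ∫ x, ψ x ∂μ := by
        rw [integral_sub (hrψ.const_mul 2) ((ψ.integrable μ).const_mul 2), integral_const_mul,
          integral_const_mul]
    _ = _ := by
        rw [integral_toReal_rnDeriv_mul hac, hH_eq,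
          integral_map measurable_fst.aemeasurable ψ.continuous.aestronglyMeasurable]

end Barycentric

structure HKAdmissible {n : ℕ} (κ : ℝ) (K : Set (Eucl n)) (μ : Measure (Eucl n))
    (π : Measure (Eucl n × Eucl n)) : Prop where
  fst_absolutelyContinuous : π.map Prod.fst ≪ μ
  ae_cos_pos : ∀ᵐ p ∂π, 0 < Real.cos (dist p.1 p.2 / κ)
  measure_compl_prod_eq_zero : π (K ×ˢ K)ᶜ = 0

lemma HKAdmissible.of_HKfun_ne_top {n : ℕ} {κ : ℝ} (hκ : 0 < κ) {K : Set (Eucl n)}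
    (hK : MeasurableSet K) {μ0 μ1 : Measure (Eucl n)} (hμ0K : μ0 Kᶜ = 0) (hμ1K : μ1 Kᶜ = 0)
    {π : Measure (Eucl n × Eucl n)} (h : HKfun κ π μ0 μ1 ≠ ⊤) : HKAdmissible κ K μ0 π := by
  obtain ⟨hcost, hKL0, hKL1⟩ := lintegral_cHK_ne_top_and_KLdiv_ne_top hκ.ne' h
  have hac0 := absolutelyContinuous_of_KLdiv_ne_top hKL0
  exact ⟨hac0, ae_cos_pos_of_lintegral_cHK_ne_top hκ hcost,
    _root_.measure_compl_prod_eq_zero hK hK hac0 (absolutelyContinuous_of_KLdiv_ne_top hKL1)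
      hμ0K hμ1K⟩

section Convergence

variable {n : ℕ} {κ : ℝ} {K : Set (Eucl n)} {μN : ℕ → Measure (Eucl n)} {μ : Measure (Eucl n)}
  {πN : ℕ → Measure (Eucl n × Eucl n)} {π : Measure (Eucl n × Eucl n)} [IsFiniteMeasure π]

lemma isFiniteMeasure_secWeighted_of_narrowTendsto [∀ N, IsFiniteMeasure (secWeighted κ (πN N))]
    (hcos : ∀ᵐ p ∂π, 0 < Real.cos (dist p.1 p.2 / κ))
    (hconv : NarrowTendsto (fun N => secWeighted κ (πN N)) (secWeighted κ π)) :
    IsFiniteMeasure (secWeighted κ π) :=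
  isFiniteMeasure_withDensity_of_narrowTendsto (by fun_prop) (hcos.mono fun p hp => by positivity)
    (.ofNormedAddCommGroup (fun p : Eucl n × Eucl n => Real.cos (dist p.1 p.2 / κ))
      (by fun_prop) 1 fun p => by simpa using Real.abs_cos_le_one _)
    (hcos.mono fun p hp => inv_mul_cancel₀ hp.ne') hconv

variable [∀ N, IsFiniteMeasure (πN N)]

lemma tendsto_integral_inner_barV [∀ N, SigmaFinite (μN N)] [SigmaFinite μ]
    [∀ N, IsFiniteMeasure (secWeighted κ (πN N))] [IsFiniteMeasure (secWeighted κ π)]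
    (hK : IsCompact K)
    (hN : ∀ N, HKAdmissible κ K (μN N) (πN N)) (h : HKAdmissible κ K μ π)
    (hconv : NarrowTendsto (fun N => secWeighted κ (πN N)) (secWeighted κ π))
    {φ : Eucl n → Eucl n} (hφ : Continuous φ) :
    Tendsto (fun N => ∫ x, ⟪φ x, barV κ (μN N) (πN N) x⟫ ∂μN N) atTop
      (𝓝 (∫ x, ⟪φ x, barV κ μ π x⟫ ∂μ)) := by
  obtain ⟨G, hG⟩ := (hK.prod hK).exists_boundedContinuousFunction_eqOn (f := fun p =>
    κ * ⟪φ p.1, radialField (fun t => Real.sin (t / κ)) p.1 p.2⟫)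
    (continuous_const.mul ((hφ.comp continuous_fst).inner
      (continuous_radialField (by fun_prop) (by simp))))
  have key {μ π} [IsFiniteMeasure π] [SigmaFinite μ] [IsFiniteMeasure (secWeighted κ π)]
      (h : HKAdmissible κ K μ π) : ∫ x, ⟪φ x, barV κ μ π x⟫ ∂μ = ∫ p, G p ∂secWeighted κ π :=
    integral_inner_barV_eq_integral_secWeighted h.fst_absolutelyContinuous h.ae_cos_pos φ
      (G.integrable _) (mem_of_superset (mem_ae_iff.mpr h.measure_compl_prod_eq_zero) hG)
  rw [key h]
  exact (hconv G).congr fun N => (key (hN N)).symm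

lemma tendsto_integral_mul_barA [∀ N, IsFiniteMeasure (μN N)] [IsFiniteMeasure μ]
    (hK : IsCompact K) (hμNK : ∀ N, μN N Kᶜ = 0) (hμK : μ Kᶜ = 0)
    (hN : ∀ N, HKAdmissible κ K (μN N) (πN N)) (h : HKAdmissible κ K μ π)
    (hconv : NarrowTendsto (fun N => secWeighted κ (πN N)) (secWeighted κ π))
    (hμconv : NarrowTendsto μN μ) {ψ : Eucl n → ℝ} (hψ : Continuous ψ) :
    Tendsto (fun N => ∫ x, ψ x * barA (μN N) (πN N) x ∂μN N) atTop
      (𝓝 (∫ x, ψ x * barA μ π x ∂μ)) := by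
  obtain ⟨g, hg⟩ := hK.exists_boundedContinuousFunction_eqOn hψ
  obtain ⟨H, hH⟩ := (hK.prod hK).exists_boundedContinuousFunction_eqOn (f := fun p =>
    Real.cos (dist p.1 p.2 / κ) * g p.1) (by fun_prop)
  have key {μ π} [IsFiniteMeasure π] [IsFiniteMeasure μ] (hμK : μ Kᶜ = 0)
      (h : HKAdmissible κ K μ π) :
      ∫ x, ψ x * barA μ π x ∂μ = 2 * ∫ p, H p ∂secWeighted κ π - 2 * ∫ x, g x ∂μ := by
    rw [← integral_mul_barA_eq_integral_secWeighted h.fst_absolutelyContinuous h.ae_cos_pos g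
      (mem_of_superset (mem_ae_iff.mpr h.measure_compl_prod_eq_zero) hH)]
    exact integral_congr_ae <| mem_of_superset (mem_ae_iff.mpr hμK) fun x hx =>
      congrArg (· * barA μ π x) (hg hx).symm
  rw [key hμK h]
  exact (((hconv H).const_mul 2).sub ((hμconv g).const_mul 2)).congr
    fun N => (key (hμNK N) (hN N)).symm

end Convergence

theorem hk_barycentric_momentum_narrow_convergence_general
    {n : ℕ} (κ : ℝ) (hκ : 0 < κ) (K : Set (Eucl n)) (hK : IsCompact K)
    (μ0N μ1N : ℕ → Measure (Eucl n))
    [∀ N, IsFiniteMeasure (μ0N N)]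
    (hμ0NK : ∀ N, μ0N N Kᶜ = 0) (hμ1NK : ∀ N, μ1N N Kᶜ = 0)
    (μ0 μ1 : Measure (Eucl n)) [IsFiniteMeasure μ0] [IsFiniteMeasure μ1]
    (hμ0conv : NarrowTendsto μ0N μ0) (hμ1conv : NarrowTendsto μ1N μ1)
    -- the plans `π^N`
    (π : ℕ → Measure (Eucl n × Eucl n)) [∀ N, IsFiniteMeasure (π N)]
    (hπNK : ∀ N, π N (K ×ˢ K)ᶜ = 0)
    (hπNKL : ∀ N, KLdiv ((π N).map Prod.fst) (μ0N N) ≠ ⊤)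
    (hπNcost : ∀ N, ∫⁻ p, cHK κ p.1 p.2 ∂(π N) ≠ ⊤)
    -- `π` is the unique minimizer of `E_κ(·|μ0,μ1)`
    (πlim : Measure (Eucl n × Eucl n)) [IsFiniteMeasure πlim]
    (hπopt : HKfun κ πlim μ0 μ1 = HK2 κ μ0 μ1)
    -- `(1/cos(d/κ))·π^N` converges narrowly to `(1/cos(d/κ))·π`
    [∀ N, IsFiniteMeasure
      ((π N).withDensity fun p => ENNReal.ofReal (Real.cos (dist p.1 p.2 / κ))⁻¹)]
    (hconv : NarrowTendsto
      (fun N => (π N).withDensity fun p => ENNReal.ofReal (Real.cos (dist p.1 p.2 / κ))⁻¹)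
      (πlim.withDensity fun p => ENNReal.ofReal (Real.cos (dist p.1 p.2 / κ))⁻¹)) :
    (∀ φ : Eucl n → Eucl n, Continuous φ →
      Tendsto (fun N => ∫ x, ⟪φ x, barV κ (μ0N N) (π N) x⟫ ∂(μ0N N)) atTop
        (𝓝 (∫ x, ⟪φ x, barV κ μ0 πlim x⟫ ∂μ0))) ∧
    (∀ ψ : Eucl n → ℝ, Continuous ψ →
      Tendsto (fun N => ∫ x, ψ x * barA (μ0N N) (π N) x ∂(μ0N N)) atTop
        (𝓝 (∫ x, ψ x * barA μ0 πlim x ∂μ0))) := by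
  have hμ0K := measure_compl_eq_zero_of_narrowTendsto hK.isClosed hμ0NK hμ0conv
  have hlim : HKAdmissible κ K μ0 πlim := .of_HKfun_ne_top hκ hK.measurableSet hμ0K
    (measure_compl_eq_zero_of_narrowTendsto hK.isClosed hμ1NK hμ1conv)
    (hπopt ▸ HK2_ne_top κ μ0 μ1)
  have hN N : HKAdmissible κ K (μ0N N) (π N) :=
    ⟨absolutelyContinuous_of_KLdiv_ne_top (hπNKL N),
      ae_cos_pos_of_lintegral_cHK_ne_top hκ (hπNcost N), hπNK N⟩
  have := isFiniteMeasure_secWeighted_of_narrowTendsto hlim.ae_cos_pos hconv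
  exact ⟨fun φ hφ => tendsto_integral_inner_barV hK hN hlim hconv hφ,
    fun ψ hψ => tendsto_integral_mul_barA hK hμ0NK hμ0K hN hlim hconv hμ0conv hψ⟩

/-- narrow convergence of the barycentric momentum measures for `HK`. -/
theorem hk_barycentric_momentum_narrow_convergence
    {n : ℕ} (hn : 1 ≤ n) (κ : ℝ) (hκ : 0 < κ) (K : Set (Eucl n)) (hK : IsCompact K)
    (μ0N μ1N : ℕ → Measure (Eucl n))
    [∀ N, IsFiniteMeasure (μ0N N)] [∀ N, IsFiniteMeasure (μ1N N)]
    (hμ0NK : ∀ N, μ0N N Kᶜ = 0) (hμ1NK : ∀ N, μ1N N Kᶜ = 0)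
    (μ0 μ1 : Measure (Eucl n)) [IsFiniteMeasure μ0] [IsFiniteMeasure μ1]
    (hμ0conv : NarrowTendsto μ0N μ0) (hμ1conv : NarrowTendsto μ1N μ1)
    (hμ0ac : μ0 ≪ (volume : Measure (Eucl n)))
    -- the plans `π^N`
    (π : ℕ → Measure (Eucl n × Eucl n)) [∀ N, IsFiniteMeasure (π N)]
    (hπNK : ∀ N, π N (K ×ˢ K)ᶜ = 0)
    (hπNKL : ∀ N, KLdiv ((π N).map Prod.fst) (μ0N N) ≠ ⊤)
    (hπNcost : ∀ N, ∫⁻ p, cHK κ p.1 p.2 ∂(π N) ≠ ⊤)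
    -- `π` is the unique minimizer of `E_κ(·|μ0,μ1)`
    (πlim : Measure (Eucl n × Eucl n)) [IsFiniteMeasure πlim]
    (hπopt : HKfun κ πlim μ0 μ1 = HK2 κ μ0 μ1)
    (hπuniq : ∀ π' : Measure (Eucl n × Eucl n), IsFiniteMeasure π' →
      HKfun κ π' μ0 μ1 = HK2 κ μ0 μ1 → π' = πlim)
    -- `(1/cos(d/κ))·π^N` converges narrowly to `(1/cos(d/κ))·π`
    [∀ N, IsFiniteMeasure
      ((π N).withDensity fun p => ENNReal.ofReal (Real.cos (dist p.1 p.2 / κ))⁻¹)]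
    (hconv : NarrowTendsto
      (fun N => (π N).withDensity fun p => ENNReal.ofReal (Real.cos (dist p.1 p.2 / κ))⁻¹)
      (πlim.withDensity fun p => ENNReal.ofReal (Real.cos (dist p.1 p.2 / κ))⁻¹)) :
    (∀ φ : Eucl n → Eucl n, Continuous φ →
      Tendsto (fun N => ∫ x, ⟪φ x, barV κ (μ0N N) (π N) x⟫ ∂(μ0N N)) atTop
        (𝓝 (∫ x, ⟪φ x, barV κ μ0 πlim x⟫ ∂μ0))) ∧
    (∀ ψ : Eucl n → ℝ, Continuous ψ →
      Tendsto (fun N => ∫ x, ψ x * barA (μ0N N) (π N) x ∂(μ0N N)) atTop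
        (𝓝 (∫ x, ψ x * barA μ0 πlim x ∂μ0))) :=
  hk_barycentric_momentum_narrow_convergence_general κ hκ K hK μ0N μ1N hμ0NK hμ1NK μ0 μ1 hμ0conv
    hμ1conv π hπNK hπNKL hπNcost πlim hπopt hconv
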